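/- arXiv:2312.07456 — 4 statements merged into one kernel-verified Lean document; each statement's English description precedes it below -/
import Mathlib

section
/- Let (K, δ) be a differential field of characteristic 0, and let f ∈ K{x} be a differential polynomial of order n with f = gh where g, h are non-unit differential polynomials. If ā ∈ K^{n+1} satisfies f_alg(ā) = 0 and s(f)_alg(ā) ≠ 0 (where s(f) is the separant ∂f/∂x^{(n)}), then exactly one of the following holds: (i) g_alg(ā) = 0, h_alg(ā) ≠ 0, s(g)_alg(ā) ≠ 0 and ord(g) = n; or (ii) h_alg(ā) = 0, g_alg(ā) ≠ 0, s(h)_alg(ā) ≠ 0 and ord(h) = n. -/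
/-!
The differential polynomial ring `K{x}` is modelled as `MvPolynomial ℕ K`,
where the variable `X i` stands for `x^(i)`; `f_alg(ā)` is `MvPolynomial.eval a f` for a
tuple `a : ℕ → K`, and the separant `s(f)` is `pderiv (ord f) f`.

By the product rule, `s(f)(ā) = s(g)(ā) h(ā) + g(ā) s(h)(ā)`. Since `g(ā) h(ā) = f(ā) = 0`
while `s(f)(ā) ≠ 0`, exactly one factor vanishes at `ā`, and then its separant does not, so
`x^(n)` occurs in it. Over a domain the variables of `g h` are those of `g` together with those
of `h`, so neither factor has order exceeding `n`.
-/

open MvPolynomial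

/-- The order of a differential polynomial: the largest variable occurring in it. -/
noncomputable def dpOrder {K : Type*} [CommRing K] (f : MvPolynomial ℕ K) : ℕ :=
  f.vars.sup id

namespace MvPolynomial

lemma vars_mul_eq {σ R : Type*} [DecidableEq σ] [CommSemiring R] [NoZeroDivisors R]
    {p q : MvPolynomial σ R} (hp : p ≠ 0) (hq : q ≠ 0) : (p * q).vars = p.vars ∪ q.vars := by
  simp only [vars_def, degrees_mul_eq hp hq, Multiset.toFinset_add]

end MvPolynomial

section DifferentialPolynomial

variable {R : Type*} [CommRing R]

lemma le_dpOrder_of_pderiv_ne_zero {p : MvPolynomial ℕ R} {i : ℕ} (h : pderiv i p ≠ 0) :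
    i ≤ dpOrder p :=
  Finset.le_sup (f := id) (not_not.mp (mt pderiv_eq_zero_of_notMem_vars h))

variable [IsDomain R]

lemma dpOrder_mul {p q : MvPolynomial ℕ R} (hp : p ≠ 0) (hq : q ≠ 0) :
    dpOrder (p * q) = max (dpOrder p) (dpOrder q) := by
  rw [dpOrder, vars_mul_eq hp hq, Finset.sup_union]
  rfl

lemma eval_pderiv_ne_zero_of_eval_mul_eq_zero {g h : MvPolynomial ℕ R} {n : ℕ} {a : ℕ → R}
    (hn : dpOrder (g * h) = n) (hs : eval a (pderiv n (g * h)) ≠ 0) (hg : eval a g = 0) :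
    eval a h ≠ 0 ∧ eval a (pderiv n g) ≠ 0 ∧ dpOrder g = n := by
  rw [pderiv_mul, map_add, eval_mul, eval_mul, hg, zero_mul, add_zero] at hs
  obtain ⟨hsg, hh⟩ := mul_ne_zero_iff.mp hs
  have hsg' : pderiv n g ≠ 0 := fun h0 => hsg (by rw [h0, map_zero])
  have hg0 : g ≠ 0 := fun h0 => hsg' (by rw [h0, map_zero])
  have hh0 : h ≠ 0 := fun h0 => hh (by rw [h0, map_zero])
  refine ⟨hh, hsg, le_antisymm ?_ (le_dpOrder_of_pderiv_ne_zero hsg')⟩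
  exact hn ▸ dpOrder_mul hg0 hh0 ▸ le_max_left _ _

end DifferentialPolynomial

theorem statement0_general {K : Type*} [Field K]
    (f g h : MvPolynomial ℕ K) (n : ℕ) (hn : dpOrder f = n)
    (hfgh : f = g * h)
    (a : ℕ → K) (hfa : eval a f = 0) (hsf : eval a (pderiv n f) ≠ 0) :
    Xor'
      (eval a g = 0 ∧ eval a h ≠ 0 ∧ eval a (pderiv n g) ≠ 0 ∧ dpOrder g = n)
      (eval a h = 0 ∧ eval a g ≠ 0 ∧ eval a (pderiv n h) ≠ 0 ∧ dpOrder h = n) := by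
  subst hfgh
  rw [eval_mul] at hfa
  rcases mul_eq_zero.mp hfa with hg | hh
  · obtain ⟨hh, hsg, hog⟩ := eval_pderiv_ne_zero_of_eval_mul_eq_zero hn hsf hg
    exact Or.inl ⟨⟨hg, hh, hsg, hog⟩, fun hB => hh hB.1⟩
  · rw [mul_comm] at hn hsf
    obtain ⟨hg, hsh, hoh⟩ := eval_pderiv_ne_zero_of_eval_mul_eq_zero hn hsf hh
    exact Or.inr ⟨⟨hh, hg, hsh, hoh⟩, fun hA => hg hA.1⟩

theorem statement0 {K : Type*} [Field K] [CharZero K]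
    (δ : K → K) (hδadd : ∀ x y, δ (x + y) = δ x + δ y)
    (hδmul : ∀ x y, δ (x * y) = δ x * y + x * δ y)
    (f g h : MvPolynomial ℕ K) (n : ℕ) (hn : dpOrder f = n)
    (hfgh : f = g * h) (hg : ¬ IsUnit g) (hh : ¬ IsUnit h)
    (a : ℕ → K) (hfa : eval a f = 0) (hsf : eval a (pderiv n f) ≠ 0) :
    Xor'
      (eval a g = 0 ∧ eval a h ≠ 0 ∧ eval a (pderiv n g) ≠ 0 ∧ dpOrder g = n)
      (eval a h = 0 ∧ eval a g ≠ 0 ∧ eval a (pderiv n h) ≠ 0 ∧ dpOrder h = n) :=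
  statement0_general f g h n hn hfgh a hfa hsf
end

section
/- Let (K, v) ⊆ (L, w) be an unramified extension of valued fields (i.e. vK = wL as subgroups of the value group of w), and let ac : K → Kv be an angular component map on (K, v). Then there is a unique angular component map on (L, w) extending ac. -/
/-!
STATEMENT 4.  Angular component maps.  We use multiplicative valuations; the residue
field of `(K, v)` is `IsLocalRing.ResidueField v.valuationSubring`, and `resOf v` is the
residue map extended by junk value `0` outside the valuation ring.  The units of the
valuation ring are exactly the elements of valuation `1`.  An extension `(K,v) ⊆ (L,w)`
is encoded by an algebra map with `v = w.comap (algebraMap K L)`, it is unramified when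
`vK = wL`, and `ρ` is the canonical embedding of residue fields (characterized by
commuting with the residue maps).  "`ac'` extends `ac`" means the square with `ρ`
commutes.
-/

/-- The residue map of a valuation, extended by `0` outside the valuation ring. -/
noncomputable def resOf {K Γ₀ : Type*} [Field K] [LinearOrderedCommGroupWithZero Γ₀]
    (v : Valuation K Γ₀) (x : K) : IsLocalRing.ResidueField v.valuationSubring :=
  if h : v x ≤ 1 then IsLocalRing.residue _ (⟨x, h⟩ : v.valuationSubring) else 0

/-- An angular component map on the valued field `(K, v)`. -/
structure AngComp {K Γ₀ : Type*} [Field K] [LinearOrderedCommGroupWithZero Γ₀]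
    (v : Valuation K Γ₀) where
  toFun : K → IsLocalRing.ResidueField v.valuationSubring
  zero_iff : ∀ x, toFun x = 0 ↔ x = 0
  map_mul : ∀ x y, toFun (x * y) = toFun x * toFun y
  res_eq : ∀ x, v x = 1 → toFun x = resOf v x

/-!
Write a nonzero `y ∈ L` as `y = x · (y / x)` with `x ∈ K` of the same value, which is possible
because the extension is unramified. Then `y / x` is a unit of the valuation ring, so an
extension `ac'` of `ac` must satisfy `ac' y = ρ (ac x) · res (y / x)`. This forces uniqueness,
and since `ac` agrees with the residue map on units of `K`, the right-hand side does not depend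
on the choice of `x`; it is the required extension.
-/

section ResOf

variable {K Γ₀ : Type*} [Field K] [LinearOrderedCommGroupWithZero Γ₀] (v : Valuation K Γ₀)

lemma resOf_one : resOf v 1 = 1 := by
  rw [resOf, dif_pos (by simp)]
  exact map_one _

lemma resOf_mul {a b : K} (ha : v a ≤ 1) (hb : v b ≤ 1) :
    resOf v (a * b) = resOf v a * resOf v b := by
  rw [resOf, resOf, resOf, dif_pos ha, dif_pos hb,
    dif_pos (by rw [map_mul]; exact mul_le_one' ha hb)]
  exact map_mul _ (⟨a, ha⟩ : v.valuationSubring) ⟨b, hb⟩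

lemma resOf_ne_zero {u : K} (hu : v u = 1) : resOf v u ≠ 0 := by
  have hu_inv : v u⁻¹ = 1 := by rw [map_inv₀, hu, inv_one]
  have hu0 : u ≠ 0 := by rintro rfl; simp at hu
  refine left_ne_zero_of_mul_eq_one (b := resOf v u⁻¹) ?_
  rw [← resOf_mul v hu.le hu_inv.le, mul_inv_cancel₀ hu0, resOf_one]

lemma Valuation.map_div_eq_one {a b : K} (hb : b ≠ 0) (h : v a = v b) : v (a / b) = 1 := by
  rw [map_div₀, h, div_self ((v.ne_zero_iff).mpr hb)]

end ResOf

namespace AngComp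

variable {K Γ₀ : Type*} [Field K] [LinearOrderedCommGroupWithZero Γ₀] {v : Valuation K Γ₀}

lemma ext_toFun {a b : AngComp v} (h : a.toFun = b.toFun) : a = b := by
  cases a; cases b; cases h; rfl

lemma map_zero (ac : AngComp v) : ac.toFun 0 = 0 := (ac.zero_iff 0).mpr rfl

lemma map_one (ac : AngComp v) : ac.toFun 1 = 1 := by
  rw [ac.res_eq 1 (by simp), resOf_one]

end AngComp

section Lift

variable {K L Γ₀ : Type*} [Field K] [Field L] [Algebra K L]
  [LinearOrderedCommGroupWithZero Γ₀] {w : Valuation L Γ₀}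
  {ρ : IsLocalRing.ResidueField (w.comap (algebraMap K L)).valuationSubring →+*
    IsLocalRing.ResidueField w.valuationSubring}
  (ac : AngComp (w.comap (algebraMap K L)))
  (hunr : ∀ y : L, ∃ x : K, w (algebraMap K L x) = w y)
  (hρ : ∀ x : K, ρ (resOf (w.comap (algebraMap K L)) x) = resOf w (algebraMap K L x))

variable (ρ) in
/-- The value at `y` forced on an extension of `ac` by a reference point `x ∈ K` with
`w x = w y`. -/
noncomputable def liftAt (x : K) (y : L) : IsLocalRing.ResidueField w.valuationSubring :=
  ρ (ac.toFun x) * resOf w (y / algebraMap K L x)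

lemma algebraMap_ne_zero_of_valuation_eq {x : K} {y : L} (hy : y ≠ 0)
    (hx : w (algebraMap K L x) = w y) : algebraMap K L x ≠ 0 := by
  rw [← w.ne_zero_iff, hx, w.ne_zero_iff]
  exact hy

include hρ in
lemma liftAt_eq_liftAt {x x' : K} {y : L} (hy : y ≠ 0) (hx : w (algebraMap K L x) = w y)
    (hx' : w (algebraMap K L x') = w y) : liftAt ρ ac x y = liftAt ρ ac x' y := by
  have hφx := algebraMap_ne_zero_of_valuation_eq hy hx
  have hφx' := algebraMap_ne_zero_of_valuation_eq hy hx'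
  have hx0 : x ≠ 0 := by rintro rfl; simp at hφx
  have hunit : w (algebraMap K L (x' / x)) = 1 := by
    rw [map_div₀]; exact w.map_div_eq_one hφx (hx'.trans hx.symm)
  have hρ_unit : ρ (ac.toFun (x' / x)) = resOf w (algebraMap K L (x' / x)) :=
    (congrArg ρ (ac.res_eq _ hunit)).trans (hρ _)
  calc liftAt ρ ac x y
      = ρ (ac.toFun x) * resOf w ((y / algebraMap K L x') * algebraMap K L (x' / x)) := by
        rw [liftAt, map_div₀]; field_simp
    _ = ρ (ac.toFun (x * (x' / x))) * resOf w (y / algebraMap K L x') := by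
        rw [resOf_mul w (w.map_div_eq_one hφx' hx'.symm).le hunit.le, ← hρ_unit,
          ac.map_mul, map_mul]
        ring
    _ = liftAt ρ ac x' y := by rw [mul_div_cancel₀ _ hx0, liftAt]

lemma liftAt_ne_zero {x : K} {y : L} (hy : y ≠ 0) (hx : w (algebraMap K L x) = w y) :
    liftAt ρ ac x y ≠ 0 := by
  have hφx := algebraMap_ne_zero_of_valuation_eq hy hx
  have hx0 : x ≠ 0 := by rintro rfl; simp at hφx
  refine mul_ne_zero ((map_ne_zero ρ).mpr ((ac.zero_iff x).not.mpr hx0)) ?_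
  exact resOf_ne_zero w (w.map_div_eq_one hφx hx.symm)

lemma liftAt_mul {x₁ x₂ : K} {y₁ y₂ : L} (hy₁ : y₁ ≠ 0) (hy₂ : y₂ ≠ 0)
    (hx₁ : w (algebraMap K L x₁) = w y₁) (hx₂ : w (algebraMap K L x₂) = w y₂) :
    liftAt ρ ac (x₁ * x₂) (y₁ * y₂) = liftAt ρ ac x₁ y₁ * liftAt ρ ac x₂ y₂ := by
  have h₁ := w.map_div_eq_one (algebraMap_ne_zero_of_valuation_eq hy₁ hx₁) hx₁.symm
  have h₂ := w.map_div_eq_one (algebraMap_ne_zero_of_valuation_eq hy₂ hx₂) hx₂.symm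
  rw [liftAt, liftAt, liftAt, map_mul, ← div_mul_div_comm, resOf_mul w h₁.le h₂.le,
    ac.map_mul, map_mul]
  ring

lemma liftAt_self {x : K} (hx : x ≠ 0) : liftAt ρ ac x (algebraMap K L x) = ρ (ac.toFun x) := by
  rw [liftAt, div_self ((map_ne_zero _).mpr hx), resOf_one, mul_one]

lemma liftAt_one {y : L} : liftAt ρ ac 1 y = resOf w y := by
  rw [liftAt, ac.map_one, _root_.map_one, one_mul, _root_.map_one, div_one]

lemma AngComp.eq_liftAt {b : AngComp w}
    (hb : ∀ x : K, b.toFun (algebraMap K L x) = ρ (ac.toFun x)) {x : K} {y : L} (hy : y ≠ 0)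
    (hx : w (algebraMap K L x) = w y) : b.toFun y = liftAt ρ ac x y := by
  have hφx := algebraMap_ne_zero_of_valuation_eq hy hx
  calc b.toFun y = b.toFun (algebraMap K L x * (y / algebraMap K L x)) := by
        rw [mul_div_cancel₀ _ hφx]
    _ = liftAt ρ ac x y := by
        rw [b.map_mul, hb, b.res_eq _ (w.map_div_eq_one hφx hx.symm), liftAt]

variable (ρ) in
open Classical in
noncomputable def liftFun (y : L) : IsLocalRing.ResidueField w.valuationSubring :=
  if y = 0 then 0 else liftAt ρ ac (hunr y).choose y

lemma liftFun_zero : liftFun ρ ac hunr 0 = 0 := if_pos rfl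

include hρ in
lemma liftFun_eq {x : K} {y : L} (hy : y ≠ 0) (hx : w (algebraMap K L x) = w y) :
    liftFun ρ ac hunr y = liftAt ρ ac x y := by
  rw [liftFun, if_neg hy]
  exact liftAt_eq_liftAt ac hρ hy (hunr y).choose_spec hx

include hρ in
lemma liftFun_zero_iff (y : L) : liftFun ρ ac hunr y = 0 ↔ y = 0 := by
  refine ⟨fun h => ?_, fun h => h ▸ liftFun_zero ac hunr⟩
  by_contra hy
  rw [liftFun_eq ac hunr hρ hy (hunr y).choose_spec] at h
  exact liftAt_ne_zero ac hy (hunr y).choose_spec h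

include hρ in
lemma liftFun_mul (y₁ y₂ : L) :
    liftFun ρ ac hunr (y₁ * y₂) = liftFun ρ ac hunr y₁ * liftFun ρ ac hunr y₂ := by
  rcases eq_or_ne y₁ 0 with rfl | hy₁
  · rw [zero_mul, liftFun_zero, zero_mul]
  rcases eq_or_ne y₂ 0 with rfl | hy₂
  · rw [mul_zero, liftFun_zero, mul_zero]
  obtain ⟨x₁, hx₁⟩ := hunr y₁
  obtain ⟨x₂, hx₂⟩ := hunr y₂
  have hx : w (algebraMap K L (x₁ * x₂)) = w (y₁ * y₂) := by
    simp only [map_mul, hx₁, hx₂]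
  rw [liftFun_eq ac hunr hρ (mul_ne_zero hy₁ hy₂) hx, liftFun_eq ac hunr hρ hy₁ hx₁,
    liftFun_eq ac hunr hρ hy₂ hx₂, liftAt_mul ac hy₁ hy₂ hx₁ hx₂]

noncomputable def AngComp.lift : AngComp w where
  toFun := liftFun ρ ac hunr
  zero_iff := liftFun_zero_iff ac hunr hρ
  map_mul := liftFun_mul ac hunr hρ
  res_eq y hy := by
    have hy0 : y ≠ 0 := by rintro rfl; simp at hy
    rw [liftFun_eq ac hunr hρ hy0 (by rw [_root_.map_one, _root_.map_one, hy]), liftAt_one]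

lemma AngComp.lift_algebraMap (x : K) :
    (AngComp.lift ac hunr hρ).toFun (algebraMap K L x) = ρ (ac.toFun x) := by
  rcases eq_or_ne x 0 with rfl | hx
  · rw [_root_.map_zero, AngComp.map_zero, ac.map_zero, _root_.map_zero]
  · exact (liftFun_eq ac hunr hρ ((map_ne_zero _).mpr hx) rfl).trans (liftAt_self ac hx)

end Lift

theorem statement4 {K L Γ₀ : Type*} [Field K] [Field L] [Algebra K L]
    [LinearOrderedCommGroupWithZero Γ₀] (w : Valuation L Γ₀)
    (hunr : ∀ y : L, ∃ x : K, w (algebraMap K L x) = w y)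
    (ρ : IsLocalRing.ResidueField (w.comap (algebraMap K L)).valuationSubring →+*
      IsLocalRing.ResidueField w.valuationSubring)
    (hρ : ∀ x : K, ρ (resOf (w.comap (algebraMap K L)) x) = resOf w (algebraMap K L x))
    (ac : AngComp (w.comap (algebraMap K L))) :
    ∃! ac' : AngComp w, ∀ x : K, ac'.toFun (algebraMap K L x) = ρ (ac.toFun x) := by
  refine ⟨AngComp.lift ac hunr hρ, AngComp.lift_algebraMap ac hunr hρ, fun b hb => ?_⟩
  refine AngComp.ext_toFun (funext fun y => ?_)
  rcases eq_or_ne y 0 with rfl | hy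
  · rw [b.map_zero, AngComp.map_zero]
  · obtain ⟨x, hx⟩ := hunr y
    exact (ac.eq_liftAt hb hy hx).trans (liftFun_eq ac hunr hρ hy hx).symm
end

section
/- Let (K, v, δ) be a differentially henselian field of equicharacteristic 0, i.e., (K,v) is a henselian valued field of residue characteristic 0 and for every differential polynomial f ∈ K{x} of order n, every ā ∈ K^{n+1} with f_alg(ā) = 0 and s(f)_alg(ā) ≠ 0, and every γ ∈ vK, there is b ∈ K with f(b) = 0 and v(δ^i(b) − a_i) > γ for i ≤ n. Then for any maximal differential subfield L of the valuation ring O_v, the restriction of the residue map to L is surjective onto the residue field Kv. -/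
/-!
STATEMENT 10.  Multiplicative valuations: `v(x) > γ` (additive, `γ ∈ vK`) becomes
`v x < v c` for `c ∈ K^×`, and `x ∈ O_v` is `v x ≤ 1`.  A differential polynomial of
order `n` is represented by its algebraic avatar `f : MvPolynomial (Fin (n+1)) K` (the
variable `i` stands for `x^(i)`), so `f(b) = eval (fun i => δ^[i] b) f` and the separant
is `pderiv (Fin.last n) f`.  Equicharacteristic 0 means `K` and the residue field have
characteristic 0, and a maximal differential subfield of `O_v` is a subfield of `K`
contained in `O_v` and closed under `δ`, maximal among such.  The conclusion says the
residue map restricted to `L` is onto the residue field.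
-/

open MvPolynomial

/-!
Given a residue class `y`, we find `b ∈ O_v` with residue `y` such that `L(b)` still lies in
`O_v` and is closed under `δ`; maximality of `L` then forces `b ∈ L`.

If `y` is algebraic over the image of `L`, Hensel's lemma lifts `y` to a simple root `b` of its
minimal polynomial `P ∈ L[X]`. Then `L(b) = L[b] ⊆ O_v`, and differentiating `P(b) = 0` gives
`δ b = -P^δ(b) / P'(b) ∈ L(b)`. If `y` is transcendental, differential henselianity gives a
constant `b` with residue `y`; each nonzero `q(b)` with `q ∈ L[X]` has nonzero residue `q̄(y)`,
so it is a unit of `O_v`, and again `L(b) ⊆ O_v`. In both cases the elements of `L(b)` whose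
derivative lies in `L(b)` form a subfield containing `L` and `b`, so `L(b)` is closed under `δ`.
-/

open IsLocalRing IntermediateField

section Polynomial

open Polynomial

section Derivation

variable {R K : Type*} [CommRing R] [Field K] [Algebra R K] (D : Derivation R K K)

def Derivation.subfieldPreimage (F : Subfield K) : Subfield K where
  carrier := {x | x ∈ F ∧ D x ∈ F}
  zero_mem' := ⟨zero_mem F, by simp⟩
  one_mem' := ⟨one_mem F, by simp⟩
  add_mem' := fun ⟨hx, hDx⟩ ⟨hy, hDy⟩ => ⟨add_mem hx hy, by simpa using add_mem hDx hDy⟩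
  neg_mem' := fun ⟨hx, hDx⟩ => ⟨neg_mem hx, by simpa using neg_mem hDx⟩
  mul_mem' := fun {x y} ⟨hx, hDx⟩ ⟨hy, hDy⟩ =>
    ⟨mul_mem hx hy, by simpa using add_mem (mul_mem hx hDy) (mul_mem hy hDx)⟩
  inv_mem' := fun x ⟨hx, hDx⟩ =>
    ⟨inv_mem hx, by
      rw [Derivation.leibniz_inv, smul_eq_mul]
      exact mul_mem (neg_mem (pow_mem (inv_mem hx) 2)) hDx⟩

variable {L : Subfield K}

theorem Derivation.map_aeval_sub_mem (hL : ∀ x ∈ L, D x ∈ L) (b : K) (q : L[X]) :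
    D (aeval b q) - aeval b (derivative q) * D b ∈ L⟮b⟯ := by
  induction q using Polynomial.induction_on' with
  | add p q hp hq =>
    convert add_mem hp hq using 1
    simp only [map_add, add_mul]
    abel
  | monomial n c =>
    convert mul_mem ((L⟮b⟯).algebraMap_mem ⟨D c, hL c c.2⟩)
      (pow_mem (mem_adjoin_simple_self L b) n) using 1
    rw [show algebraMap L K ⟨D c, hL c c.2⟩ = D (algebraMap L K c) from rfl]
    simp only [Polynomial.aeval_monomial, derivative_monomial, Derivation.leibniz,
      Derivation.leibniz_pow, map_mul, _root_.map_natCast, smul_eq_mul, nsmul_eq_mul]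
    ring

variable {D} {b : K}

theorem Derivation.mem_adjoin_simple_of_aeval_eq_zero (hL : ∀ x ∈ L, D x ∈ L) {P : L[X]}
    (hP : aeval b P = 0) (hP' : aeval b (derivative P) ≠ 0) : D b ∈ L⟮b⟯ := by
  have h := D.map_aeval_sub_mem hL b P
  rw [hP, D.map_zero, zero_sub, neg_mem_iff] at h
  have hP'mem : aeval b (derivative P) ∈ L⟮b⟯ :=
    algebra_adjoin_le_adjoin L {b} (aeval_mem_adjoin_singleton L b)
  simpa [hP'] using mul_mem (inv_mem hP'mem) h

theorem Derivation.mapsTo_adjoin_simple (hL : ∀ x ∈ L, D x ∈ L) (hb : D b ∈ L⟮b⟯) :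
    ∀ x ∈ L⟮b⟯, D x ∈ L⟮b⟯ := by
  suffices L⟮b⟯.toSubfield ≤ D.subfieldPreimage L⟮b⟯.toSubfield from
    fun x hx => (this hx).2
  rw [adjoin_toSubfield, Subfield.closure_le, Set.union_subset_iff, Set.singleton_subset_iff]
  refine ⟨?_, mem_adjoin_simple_self L b, hb⟩
  rintro _ ⟨c, rfl⟩
  exact ⟨(L⟮b⟯).algebraMap_mem c, (L⟮b⟯).algebraMap_mem ⟨D c, hL c c.2⟩⟩

end Derivation

section LocalSubring

variable {K S : Type*} [Field K] [SetLike S K] [SubringClass S K] {O : S} {L : Subfield K}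

variable (O) in
def Subfield.inclusionOfSubset (hL : ∀ x ∈ L, x ∈ O) : L →+* O :=
  L.subtype.codRestrict O fun x => hL x x.2

theorem Subfield.coe_eval₂_inclusionOfSubset (hL : ∀ x ∈ L, x ∈ O) (b : O) (q : L[X]) :
    ((q.eval₂ (L.inclusionOfSubset O hL) b : O) : K) = aeval (b : K) q := by
  rw [Polynomial.aeval_def]
  exact Polynomial.hom_eval₂ q _ (SubringClass.subtype O) b

theorem adjoin_simple_subset_of_isIntegral (hL : ∀ x ∈ L, x ∈ O) {b : O}
    (hb : IsIntegral L (b : K)) : (L⟮(b : K)⟯ : Set K) ⊆ O := by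
  intro x hx
  rw [SetLike.mem_coe, ← mem_toSubalgebra,
    adjoin_simple_toSubalgebra_of_isAlgebraic hb.isAlgebraic,
    Algebra.adjoin_singleton_eq_range_aeval] at hx
  obtain ⟨q, rfl⟩ := hx
  exact L.coe_eval₂_inclusionOfSubset hL b q ▸ SetLike.coe_mem _

theorem adjoin_simple_subset_of_inv_mem (hL : ∀ x ∈ L, x ∈ O) {b : O}
    (hinv : ∀ q : L[X], q ≠ 0 → (aeval (b : K) q)⁻¹ ∈ O) :
    (L⟮(b : K)⟯ : Set K) ⊆ O := by
  intro x hx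
  obtain ⟨q, r, rfl⟩ := (mem_adjoin_simple_iff L x).1 hx
  rcases eq_or_ne r 0 with rfl | hr
  · simp [zero_mem O]
  rw [div_eq_mul_inv, ← L.coe_eval₂_inclusionOfSubset hL]
  exact mul_mem (SetLike.coe_mem _) (hinv r hr)

variable [IsLocalRing O]

noncomputable def Subfield.residueOfSubset (hL : ∀ x ∈ L, x ∈ O) : L →+* ResidueField O :=
  (residue O).comp (L.inclusionOfSubset O hL)

theorem Subfield.residue_eval₂_inclusionOfSubset (hL : ∀ x ∈ L, x ∈ O) (b : O) (q : L[X]) :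
    residue O (q.eval₂ (L.inclusionOfSubset O hL) b) =
      q.eval₂ (L.residueOfSubset hL) (residue O b) :=
  Polynomial.hom_eval₂ _ _ _ _

variable {R : Type*} [CommRing R] [Algebra R K] {D : Derivation R K K}

theorem exists_lift_of_algebraic [CharZero K] (hH : HenselianLocalRing O)
    (hL : ∀ x ∈ L, x ∈ O) (hD : ∀ x ∈ L, D x ∈ L) {y : ResidueField O}
    (hy : ∃ q : L[X], q ≠ 0 ∧ q.eval₂ (L.residueOfSubset hL) y = 0) :
    ∃ b : O, residue O b = y ∧ (L⟮(b : K)⟯ : Set K) ⊆ O ∧ D b ∈ L⟮(b : K)⟯ := by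
  let := (L.residueOfSubset hL).toAlgebra
  obtain ⟨P, hPmonic, hProot, hPsep⟩ : ∃ P : L[X],
      P.Monic ∧ P.eval₂ (L.residueOfSubset hL) y = 0 ∧ P.Separable := by
    obtain ⟨q, hq, hqy⟩ := hy
    have hint : IsIntegral L y := (show IsAlgebraic L y from ⟨q, hq, hqy⟩).isIntegral
    exact ⟨minpoly L y, minpoly.monic hint, minpoly.aeval L y,
      (minpoly.irreducible hint).separable⟩
  have hP'y := hPsep.eval₂_derivative_ne_zero _ hProot
  set ι := L.inclusionOfSubset O hL
  have hHensel := ((HenselianLocalRing.TFAE O).out 0 1).mp hH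
  obtain ⟨b, hbroot, rfl⟩ := hHensel (P.map ι) (hPmonic.map ι) y
    (by rwa [Polynomial.aeval_def, Polynomial.eval₂_map])
    (by rwa [derivative_map, Polynomial.aeval_def, Polynomial.eval₂_map])
  have hPb : aeval (b : K) P = 0 := by
    rw [← L.coe_eval₂_inclusionOfSubset hL, ← Polynomial.eval_map, hbroot.eq_zero,
      ZeroMemClass.coe_zero]
  have hP'b : aeval (b : K) (derivative P) ≠ 0 := by
    rw [← L.coe_eval₂_inclusionOfSubset hL, ne_eq, ZeroMemClass.coe_eq_zero]
    intro h
    rw [← L.residue_eval₂_inclusionOfSubset hL, h, map_zero] at hP'y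
    exact hP'y rfl
  exact ⟨b, rfl, adjoin_simple_subset_of_isIntegral hL ⟨P, hPmonic, hPb⟩,
    D.mem_adjoin_simple_of_aeval_eq_zero hD hPb hP'b⟩

theorem exists_lift_of_transcendental (hL : ∀ x ∈ L, x ∈ O)
    (hconst : ∀ a : O, ∃ b : O, D b = 0 ∧ residue O b = residue O a) {y : ResidueField O}
    (hy : ∀ q : L[X], q ≠ 0 → q.eval₂ (L.residueOfSubset hL) y ≠ 0) :
    ∃ b : O, residue O b = y ∧ (L⟮(b : K)⟯ : Set K) ⊆ O ∧ D b ∈ L⟮(b : K)⟯ := by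
  obtain ⟨a, rfl⟩ := residue_surjective y
  obtain ⟨b, hDb, hba⟩ := hconst a
  refine ⟨b, hba, adjoin_simple_subset_of_inv_mem hL fun q hq => ?_, hDb ▸ zero_mem _⟩
  obtain ⟨u, hu⟩ : IsUnit (q.eval₂ (L.inclusionOfSubset O hL) b) := by
    rw [← residue_ne_zero_iff_isUnit, L.residue_eval₂_inclusionOfSubset hL, hba]
    exact hy q hq
  rw [← L.coe_eval₂_inclusionOfSubset hL, ← hu]
  exact (map_units_inv (SubringClass.subtype O) u) ▸ SetLike.coe_mem _

end LocalSubring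

end Polynomial

section DifferentiallyHenselian

variable {K Γ₀ : Type*} [Field K] [LinearOrderedCommGroupWithZero Γ₀] (v : Valuation K Γ₀)

def IsDifferentiallyHenselian (δ : K → K) : Prop :=
  ∀ (n : ℕ) (f : MvPolynomial (Fin (n + 1)) K) (a : Fin (n + 1) → K),
    eval a f = 0 → eval a (pderiv (Fin.last n) f) ≠ 0 →
    ∀ c : K, c ≠ 0 → ∃ b : K,
      eval (fun i : Fin (n + 1) => δ^[(i : ℕ)] b) f = 0 ∧
      ∀ i : Fin (n + 1), v (δ^[(i : ℕ)] b - a i) < v c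

variable {v}

theorem Valuation.residue_eq_of_sub_lt_one {a b : v.valuationSubring} (h : v ((b : K) - a) < 1) :
    residue _ b = residue _ a := by
  rw [← sub_eq_zero, ← _root_.map_sub, residue_eq_zero_iff,
    ValuationSubring.valuation_lt_one_iff]
  exact v.isEquiv_valuation_valuationSubring.lt_one_iff_lt_one.1 h

theorem IsDifferentiallyHenselian.exists_const_residue_eq {δ : K → K}
    (hδ : IsDifferentiallyHenselian v δ) (a : v.valuationSubring) :
    ∃ b : v.valuationSubring, δ b = 0 ∧ residue _ b = residue _ a := by
  obtain ⟨b, hδb, hba⟩ :=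
    hδ 1 (X 1) ![(a : K), 0] (by simp) (by simp [Fin.last]) 1 one_ne_zero
  have hba : v (b - a) < 1 := by simpa using hba 0
  have hb : v b ≤ 1 := by simpa using v.map_add_le hba.le a.2
  exact ⟨⟨b, hb⟩, by simpa using hδb, Valuation.residue_eq_of_sub_lt_one hba⟩

end DifferentiallyHenselian

theorem statement10_general {K Γ₀ : Type*} [Field K] [CharZero K]
    [LinearOrderedCommGroupWithZero Γ₀] (v : Valuation K Γ₀)
    (hH : HenselianLocalRing ↥v.valuationSubring)
    (δ : K → K) (hδadd : ∀ x y, δ (x + y) = δ x + δ y)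
    (hδmul : ∀ x y, δ (x * y) = δ x * y + x * δ y)
    (hDH : ∀ (n : ℕ) (f : MvPolynomial (Fin (n + 1)) K) (a : Fin (n + 1) → K),
      eval a f = 0 → eval a (pderiv (Fin.last n) f) ≠ 0 →
      ∀ c : K, c ≠ 0 → ∃ b : K,
        eval (fun i : Fin (n + 1) => δ^[(i : ℕ)] b) f = 0 ∧
        ∀ i : Fin (n + 1), v (δ^[(i : ℕ)] b - a i) < v c)
    (L : Subfield K) (hLsub : ∀ x ∈ L, v x ≤ 1) (hLdiff : ∀ x ∈ L, δ x ∈ L)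
    (hLmax : ∀ L' : Subfield K, (∀ x ∈ L', v x ≤ 1) → (∀ x ∈ L', δ x ∈ L') →
      L ≤ L' → L' = L) :
    ∀ y : IsLocalRing.ResidueField ↥v.valuationSubring, ∃ x ∈ L, resOf v x = y := by
  intro y
  let D : Derivation ℤ K K :=
    Derivation.mk' (AddMonoidHom.mk' δ hδadd).toIntLinearMap fun x y => by
      simp [hδmul, add_comm, mul_comm]
  obtain ⟨b, rfl, hbO, hDb⟩ : ∃ b : v.valuationSubring, residue _ b = y ∧
      (L⟮(b : K)⟯ : Set K) ⊆ v.valuationSubring ∧ D b ∈ L⟮(b : K)⟯ := by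
    by_cases hy : ∃ q : Polynomial L, q ≠ 0 ∧ q.eval₂ (L.residueOfSubset hLsub) y = 0
    · exact exists_lift_of_algebraic hH hLsub hLdiff hy
    · push Not at hy
      refine exists_lift_of_transcendental hLsub (fun a => ?_) hy
      exact IsDifferentiallyHenselian.exists_const_residue_eq (δ := δ) hDH a
  have hLb : L⟮(b : K)⟯.toSubfield = L :=
    hLmax _ (fun x hx => hbO hx) (D.mapsTo_adjoin_simple hLdiff hDb)
      fun x hx => L⟮(b : K)⟯.algebraMap_mem ⟨x, hx⟩
  exact ⟨b, hLb ▸ mem_adjoin_simple_self L (b : K), dif_pos b.2⟩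

theorem statement10 {K Γ₀ : Type*} [Field K] [CharZero K]
    [LinearOrderedCommGroupWithZero Γ₀] (v : Valuation K Γ₀)
    (hH : HenselianLocalRing ↥v.valuationSubring)
    (hres0 : CharZero (IsLocalRing.ResidueField ↥v.valuationSubring))
    (δ : K → K) (hδadd : ∀ x y, δ (x + y) = δ x + δ y)
    (hδmul : ∀ x y, δ (x * y) = δ x * y + x * δ y)
    (hDH : ∀ (n : ℕ) (f : MvPolynomial (Fin (n + 1)) K) (a : Fin (n + 1) → K),
      eval a f = 0 → eval a (pderiv (Fin.last n) f) ≠ 0 →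
      ∀ c : K, c ≠ 0 → ∃ b : K,
        eval (fun i : Fin (n + 1) => δ^[(i : ℕ)] b) f = 0 ∧
        ∀ i : Fin (n + 1), v (δ^[(i : ℕ)] b - a i) < v c)
    (L : Subfield K) (hLsub : ∀ x ∈ L, v x ≤ 1) (hLdiff : ∀ x ∈ L, δ x ∈ L)
    (hLmax : ∀ L' : Subfield K, (∀ x ∈ L', v x ≤ 1) → (∀ x ∈ L', δ x ∈ L') →
      L ≤ L' → L' = L) :
    ∀ y : IsLocalRing.ResidueField ↥v.valuationSubring, ∃ x ∈ L, resOf v x = y :=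
  statement10_general v hH δ hδadd hδmul hDH L hLsub hLdiff hLmax
end

section
/- Let (K, δ) be a differentially closed field of characteristic 0 (a model of DCF₀) with constant field C_K. Then K admits a nontrivial henselian valuation v such that the constants C_K are not dense in K with respect to the valuation topology; in particular (K, v, δ) is not differentially henselian. (Concretely: for any a ∈ K \ C_K, there is a valuation ring O of K containing C_K[a] whose maximal ideal meets C_K[a] in the ideal aC_K[a]; then v(C_K^×) = {0}, so the open ball {x : v(x) > 0} contains no nonzero constant.) -/
/-!
The constant field `C` is algebraically closed, hence integrally closed in `K`. For a
nonconstant `a`, the element `a⁻¹ ∉ C` is then omitted by some valuation ring `O ⊇ C`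
(Chevalley), so `v a < 1` while every nonzero constant is a unit of `O`; hence
`v (a - c) = max (v a) (v c) ≥ v a` for every constant `c`. Henselianity is automatic: over
the algebraically closed `K` a monic `p` is a product of linear factors, so if `v (p b) < 1`
then `v (b - r) < 1` for some root `r`.
-/

/-- The constant subfield of a derivation. -/
def constSubfield {K : Type*} [Field K] (δ : K → K)
    (hδadd : ∀ x y, δ (x + y) = δ x + δ y)
    (hδmul : ∀ x y, δ (x * y) = δ x * y + x * δ y) : Subfield K where
  carrier := {x | δ x = 0}
  zero_mem' := by have := hδadd 0 0; simpa using this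
  one_mem' := by have := hδmul 1 1; simpa using this
  add_mem' := by intro a b ha hb; simp only [Set.mem_setOf_eq] at *; rw [hδadd, ha, hb, add_zero]
  mul_mem' := by
    intro a b ha hb; simp only [Set.mem_setOf_eq] at *; rw [hδmul, ha, hb]; ring
  neg_mem' := by
    intro a ha; simp only [Set.mem_setOf_eq] at *
    have h0 : δ 0 = 0 := by have := hδadd 0 0; simpa using this
    have h2 := hδadd a (-a)
    rw [add_neg_cancel, h0, ha] at h2
    simpa using h2.symm
  inv_mem' := by
    intro a ha
    simp only [Set.mem_setOf_eq] at *
    by_cases h : a = 0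
    · have h0 : δ 0 = 0 := by have := hδadd 0 0; simpa using this
      simp [h, h0]
    · have h2 := hδmul a a⁻¹
      rw [mul_inv_cancel₀ h, ha] at h2
      have h1 : δ 1 = 0 := by have := hδmul 1 1; simpa using this
      rw [h1] at h2
      have h3 : a * δ a⁻¹ = 0 := by simpa using h2.symm
      rcases mul_eq_zero.1 h3 with h' | h'
      · exact absurd h' h
      · exact h'

open Polynomial IsLocalRing in
theorem ValuationSubring.henselianLocalRing_of_isAlgClosed {K : Type*} [Field K]
    [IsAlgClosed K] (O : ValuationSubring K) : HenselianLocalRing O where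
  is_henselian p hp b hb _ := by
    have hvb : O.valuation (p.aeval (algebraMap O K b)) < 1 := by
      rw [aeval_algebraMap_apply_eq_algebraMap_eval]
      exact (O.valuation_lt_one_iff _).mp hb
    obtain ⟨r, hr, hvr⟩ : ∃ r ∈ p.aroots K, O.valuation ((b : K) - r) < 1 := by
      by_contra! h
      rw [(IsAlgClosed.splits _).aeval_eq_prod_aroots_of_monic hp, map_multiset_prod] at hvb
      refine hvb.not_ge (Multiset.one_le_prod_of_one_le fun _ hx ↦ ?_)
      obtain ⟨r, hr, rfl⟩ := Multiset.mem_map.mp (Multiset.map_map _ _ _ ▸ hx)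
      exact h r hr
    have hrO : r ∈ O := by
      rw [← O.valuation_le_one_iff, ← sub_sub_cancel (b : K) r]
      exact (O.valuation.map_sub _ _).trans (max_le (O.valuation_le_one b) hvr.le)
    refine ⟨⟨r, hrO⟩, Subtype.ext ?_, ?_⟩
    · exact (aeval_algebraMap_apply_eq_algebraMap_eval (A := K) _ p).symm.trans
        (mem_aroots.mp hr).2
    · rw [O.valuation_lt_one_iff]
      exact (O.valuation.map_sub_swap _ _).trans_lt hvr

theorem Subfield.isIntegrallyClosedIn_of_isAlgClosed {K : Type*} [Field K] (C : Subfield K)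
    [IsAlgClosed C] : IsIntegrallyClosedIn C.toSubring K := by
  refine Subring.isIntegrallyClosedIn_iff.mpr fun x hx ↦ ?_
  obtain ⟨c, rfl⟩ := minpoly.mem_range_of_degree_eq_one C x
    (IsAlgClosed.degree_eq_one_of_irreducible C (minpoly.irreducible hx))
  exact c.2

theorem ValuationSubring.valuation_eq_one_of_inv_mem {K : Type*} [Field K]
    (O : ValuationSubring K) {c : K} (hc : c ∈ O) (hc' : c⁻¹ ∈ O) (hc0 : c ≠ 0) :
    O.valuation c = 1 :=
  le_antisymm ((O.valuation_le_one_iff c).mpr hc)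
    ((O.valuation.one_le_val_iff hc0).mpr ((O.valuation_le_one_iff _).mpr hc'))

theorem statement11_general {K : Type*} [Field K] [IsAlgClosed K]
    (δ : K → K) (hδadd : ∀ x y, δ (x + y) = δ x + δ y)
    (hδmul : ∀ x y, δ (x * y) = δ x * y + x * δ y)
    (hδne : ∃ x : K, δ x ≠ 0)
    (hC : IsAlgClosed ↥(constSubfield δ hδadd hδmul)) :
    ∃ O : ValuationSubring K,
      O ≠ ⊤ ∧ HenselianLocalRing ↥O ∧
      (∀ c : K, δ c = 0 → c ≠ 0 → O.valuation c = 1) ∧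
      ∃ x : K, x ≠ 0 ∧ O.valuation x < 1 ∧
        ∀ c : K, δ c = 0 → ¬ O.valuation (x - c) < O.valuation x := by
  set C := constSubfield δ hδadd hδmul
  have := C.isIntegrallyClosedIn_of_isAlgClosed
  obtain ⟨a, ha⟩ := hδne
  have ha0 : a ≠ 0 := by rintro rfl; exact ha C.zero_mem
  have ha_inv : a⁻¹ ∉ C.toSubring := fun h ↦ ha (inv_inv a ▸ C.inv_mem h)
  obtain ⟨O, hCO, haO⟩ := Subring.exists_le_valuationSubring_of_isIntegrallyClosedIn ha_inv
  have hva : O.valuation a < 1 := O.mem_nonunits_iff_or.mpr (.inr haO)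
  have hconst (c : K) (hc : δ c = 0) (hc0 : c ≠ 0) : O.valuation c = 1 :=
    O.valuation_eq_one_of_inv_mem (hCO hc) (hCO (C.inv_mem hc)) hc0
  refine ⟨O, fun h ↦ haO (h ▸ ValuationSubring.mem_top _), O.henselianLocalRing_of_isAlgClosed,
    hconst, a, ha0, hva, fun c hc ↦ ?_⟩
  rcases eq_or_ne c 0 with rfl | hc0
  · simp
  · have hvc := hconst c hc hc0
    rw [O.valuation.map_sub_eq_of_lt_right (hva.trans_eq hvc.symm), hvc, not_lt]
    exact hva.le

theorem statement11 {K : Type*} [Field K] [IsAlgClosed K] [CharZero K]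
    (δ : K → K) (hδadd : ∀ x y, δ (x + y) = δ x + δ y)
    (hδmul : ∀ x y, δ (x * y) = δ x * y + x * δ y)
    (hδne : ∃ x : K, δ x ≠ 0)
    (hC : IsAlgClosed ↥(constSubfield δ hδadd hδmul)) :
    ∃ O : ValuationSubring K,
      O ≠ ⊤ ∧ HenselianLocalRing ↥O ∧
      (∀ c : K, δ c = 0 → c ≠ 0 → O.valuation c = 1) ∧
      ∃ x : K, x ≠ 0 ∧ O.valuation x < 1 ∧
        ∀ c : K, δ c = 0 → ¬ O.valuation (x - c) < O.valuation x :=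
  statement11_general δ hδadd hδmul hδne hC
end
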